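/- arXiv:2201.04832 — 8 statements merged into one kernel-verified Lean document; each statement's English description precedes it below -/
import Mathlib

section
/- Let α > 0 and C > 0, let r : (0,∞) → ℝ be continuous with 0 < r(z) ≤ C(1+z) for all z > 0, let λ ≥ αC, and let f ∈ X_{0,α}. Then for every y > 0, |(1/r(y)) ∫₀^y exp(−λ ∫ₓ^y dτ/r(τ)) f(x) dx| ≤ ‖f‖_{X_{0,α}} / ((1+y)^α r(y)). -/
open MeasureTheory Set

/-!
Since `r τ ≤ C (1 + τ)`, the characteristic time `∫ₓ^y dτ / r τ` is at least
`C⁻¹ log ((1 + y) / (1 + x))`, so for `λ ≥ α C` the kernel `exp (-λ ∫ₓ^y dτ / r τ)` is at most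
`((1 + x) / (1 + y))^α`. Integrating this against `|f|` over `(0, y)` gives the weighted norm of `f`
divided by `(1 + y)^α`.
-/

lemma integral_one_div_const_mul_one_add (C : ℝ) {x y : ℝ} (hx : -1 < x) (hy : -1 < y) :
    ∫ τ in x..y, 1 / (C * (1 + τ)) = C⁻¹ * Real.log ((1 + y) / (1 + x)) := by
  simp_rw [one_div, mul_inv]
  rw [intervalIntegral.integral_const_mul, intervalIntegral.integral_comp_add_left (fun u ↦ u⁻¹),
    integral_inv_of_pos (by linarith) (by linarith)]

lemma inv_mul_log_le_integral_one_div {C : ℝ} {r : ℝ → ℝ} (hr_cont : ContinuousOn r (Ioi 0))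
    (hr_pos : ∀ z > (0 : ℝ), 0 < r z) (hr_le : ∀ z > (0 : ℝ), r z ≤ C * (1 + z))
    {x y : ℝ} (hx : 0 < x) (hxy : x ≤ y) :
    C⁻¹ * Real.log ((1 + y) / (1 + x)) ≤ ∫ τ in x..y, 1 / r τ := by
  have hsub : Icc x y ⊆ Ioi 0 := fun z hz ↦ hx.trans_le hz.1
  rw [← integral_one_div_const_mul_one_add C (by linarith) (by linarith)]
  refine intervalIntegral.integral_mono_on hxy ?_ ?_ fun z hz ↦
    one_div_le_one_div_of_le (hr_pos z (hsub hz)) (hr_le z (hsub hz))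
  · refine ContinuousOn.intervalIntegrable_of_Icc hxy (continuousOn_const.div (by fun_prop) ?_)
    intro z hz
    exact ((hr_pos z (hsub hz)).trans_le (hr_le z (hsub hz))).ne'
  · exact ContinuousOn.intervalIntegrable_of_Icc hxy
      (continuousOn_const.div (hr_cont.mono hsub) fun z hz ↦ (hr_pos z (hsub hz)).ne')

lemma exp_neg_mul_integral_one_div_le {α C lam : ℝ} (hα : 0 ≤ α) (hC : 0 < C)
    (hlam : α * C ≤ lam) {r : ℝ → ℝ} (hr_cont : ContinuousOn r (Ioi 0))
    (hr_pos : ∀ z > (0 : ℝ), 0 < r z) (hr_le : ∀ z > (0 : ℝ), r z ≤ C * (1 + z))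
    {x y : ℝ} (hx : 0 < x) (hxy : x ≤ y) :
    Real.exp (-(lam * ∫ τ in x..y, 1 / r τ)) ≤ (1 + x) ^ α / (1 + y) ^ α := by
  have h1x : 0 < 1 + x := by linarith
  have h1y : 0 < 1 + y := by linarith
  have hlog : 0 ≤ Real.log ((1 + y) / (1 + x)) :=
    Real.log_nonneg ((le_div_iff₀ h1x).2 (by linarith))
  have hexponent : α * Real.log ((1 + y) / (1 + x)) ≤ lam * ∫ τ in x..y, 1 / r τ :=
    calc α * Real.log ((1 + y) / (1 + x))
        = α * C * (C⁻¹ * Real.log ((1 + y) / (1 + x))) := by field_simp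
      _ ≤ lam * (C⁻¹ * Real.log ((1 + y) / (1 + x))) := by gcongr
      _ ≤ lam * ∫ τ in x..y, 1 / r τ := by
        gcongr
        · exact (by positivity : 0 ≤ α * C).trans hlam
        · exact inv_mul_log_le_integral_one_div hr_cont hr_pos hr_le hx hxy
  calc Real.exp (-(lam * ∫ τ in x..y, 1 / r τ))
      ≤ Real.exp (Real.log ((1 + x) / (1 + y)) * α) := by
        rw [← inv_div, Real.log_inv]
        gcongr
        linarith
    _ = (1 + x) ^ α / (1 + y) ^ α := by
        rw [← Real.rpow_def_of_pos (by positivity), Real.div_rpow h1x.le h1y.le]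

theorem stmt1_general (α C : ℝ) (hα : 0 < α) (hC : 0 < C) (r : ℝ → ℝ)
    (hr_cont : ContinuousOn r (Ioi (0 : ℝ)))
    (hr_pos : ∀ z > (0 : ℝ), 0 < r z) (hr_le : ∀ z > (0 : ℝ), r z ≤ C * (1 + z))
    (lam : ℝ) (hlam : α * C ≤ lam)
    (f : ℝ → ℝ)
    (hf_int : IntegrableOn (fun x => |f x| * (1 + x) ^ α) (Ioi (0 : ℝ))) :
    ∀ y > (0 : ℝ),
      |(1 / r y) * ∫ x in Ioo (0 : ℝ) y, Real.exp (-(lam * ∫ τ in x..y, 1 / r τ)) * f x|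
        ≤ (∫ x in Ioi (0 : ℝ), |f x| * (1 + x) ^ α) / ((1 + y) ^ α * r y) := by
  intro y hy
  have hry : 0 < r y := hr_pos y hy
  have hweighted_nonneg : ∀ x ∈ Ioi (0 : ℝ), 0 ≤ |f x| * (1 + x) ^ α := fun x (hx : 0 < x) ↦ by
    positivity
  have hkernel : |∫ x in Ioo (0 : ℝ) y, Real.exp (-(lam * ∫ τ in x..y, 1 / r τ)) * f x|
      ≤ ∫ x in Ioo (0 : ℝ) y, |f x| * (1 + x) ^ α / (1 + y) ^ α := by
    rw [← Real.norm_eq_abs]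
    refine norm_integral_le_of_norm_le ((hf_int.mono_set Ioo_subset_Ioi_self).div_const _) ?_
    filter_upwards [ae_restrict_mem measurableSet_Ioo] with x hx
    rw [Real.norm_eq_abs, abs_mul, abs_of_pos (Real.exp_pos _), mul_div_assoc, mul_comm]
    gcongr
    exact exp_neg_mul_integral_one_div_le hα.le hC hlam hr_cont hr_pos hr_le hx.1 hx.2.le
  have hrestrict :
      ∫ x in Ioo (0 : ℝ) y, |f x| * (1 + x) ^ α ≤ ∫ x in Ioi (0 : ℝ), |f x| * (1 + x) ^ α :=
    setIntegral_mono_set hf_int (ae_restrict_of_forall_mem measurableSet_Ioi hweighted_nonneg)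
      Ioo_subset_Ioi_self.eventuallyLE
  calc |(1 / r y) * ∫ x in Ioo (0 : ℝ) y, Real.exp (-(lam * ∫ τ in x..y, 1 / r τ)) * f x|
      ≤ 1 / r y * ((∫ x in Ioo (0 : ℝ) y, |f x| * (1 + x) ^ α) / (1 + y) ^ α) := by
        rw [abs_mul, abs_of_pos (one_div_pos.2 hry), ← integral_div]
        gcongr
    _ ≤ 1 / r y * ((∫ x in Ioi (0 : ℝ), |f x| * (1 + x) ^ α) / (1 + y) ^ α) := by gcongr
    _ = (∫ x in Ioi (0 : ℝ), |f x| * (1 + x) ^ α) / ((1 + y) ^ α * r y) := by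
        field_simp

/-- Pointwise estimate for the resolvent of the growth semigroup in
`X_{0,α} = L¹((0,∞), (1+x)^α dx)`: if `0 < r(z) ≤ C(1+z)` and `λ ≥ αC`, then for every `y > 0`,
`|(1/r(y)) ∫₀^y exp(−λ ∫ₓ^y dτ/r(τ)) f(x) dx| ≤ ‖f‖_{X_{0,α}} / ((1+y)^α r(y))`. -/
theorem stmt1 (α C : ℝ) (hα : 0 < α) (hC : 0 < C) (r : ℝ → ℝ)
    (hr_cont : ContinuousOn r (Ioi (0 : ℝ)))
    (hr_pos : ∀ z > (0 : ℝ), 0 < r z) (hr_le : ∀ z > (0 : ℝ), r z ≤ C * (1 + z))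
    (lam : ℝ) (hlam : α * C ≤ lam)
    (f : ℝ → ℝ) (hf_meas : Measurable f)
    (hf_int : IntegrableOn (fun x => |f x| * (1 + x) ^ α) (Ioi (0 : ℝ))) :
    ∀ y > (0 : ℝ),
      |(1 / r y) * ∫ x in Ioo (0 : ℝ) y, Real.exp (-(lam * ∫ τ in x..y, 1 / r τ)) * f x|
        ≤ (∫ x in Ioi (0 : ℝ), |f x| * (1 + x) ^ α) / ((1 + y) ^ α * r y) :=
  stmt1_general α C hα hC r hr_cont hr_pos hr_le lam hlam f hf_int
end

section
/- Let α > 0 and C > 0, let r : (0,∞) → ℝ be continuous with 0 < r(z) ≤ C(1+z) for all z > 0, let a : (0,∞) → [0,∞) be locally integrable, let λ ≥ αC, and let f : (0,∞) → [0,∞) be measurable with ∫₀^∞ f(x)(1+x)^α dx < ∞. Then ∫₀^∞ (R_λ f)(y) · a(y) · (1+y)^α dy ≤ ∫₀^∞ f(x) (1+x)^α dx. -/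
/-!
Write `g = a / r`. The survival factor `exp (-∫ₓʸ (λ + a) / r)` splits as
`exp (-∫ₓʸ λ / r) * exp (-∫ₓʸ g)`, and `λ / r τ ≥ α / (1 + τ)` bounds the first factor by
`((1 + x) / (1 + y)) ^ α`, which trades the weight `(1 + y) ^ α` for `(1 + x) ^ α`. After
exchanging the order of integration over `0 < x < y`, it remains to see that
`∫_x^∞ g y * exp (-∫ₓʸ g) dy ≤ 1`: the integrand is the a.e. derivative of the monotone function
`y ↦ -exp (-∫ₓʸ g)`, which increases by at most `1`.
-/

open MeasureTheory Set

theorem ofReal_integral_le_lintegral_ofReal {X : Type*} [MeasurableSpace X] {μ : Measure X}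
    {f : X → ℝ} (hf : 0 ≤ᵐ[μ] f) :
    ENNReal.ofReal (∫ x, f x ∂μ) ≤ ∫⁻ x, ENNReal.ofReal (f x) ∂μ := by
  by_cases h : Integrable f μ
  · rw [ofReal_integral_eq_lintegral_ofReal h hf]
  · simp [integral_undef h]

theorem setLIntegral_Ioc_mul_exp_neg_integral_le_one {g : ℝ → ℝ} {x b : ℝ} (hxb : x ≤ b)
    (hg : ∀ y ∈ Icc x b, 0 ≤ g y) (hint : IntervalIntegrable g volume x b) :
    ∫⁻ y in Ioc x b, ENNReal.ofReal (g y * Real.exp (-∫ τ in x..y, g τ)) ≤ 1 := by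
  set F : ℝ → ℝ := fun y => -Real.exp (-∫ τ in x..y, g τ)
  have hF_mono : MonotoneOn F (uIcc x b) := by
    rw [uIcc_of_le hxb]
    intro y₁ hy₁ y₂ hy₂ h
    have hsub : ∀ {c d}, c ∈ Icc x b → d ∈ Icc x b → IntervalIntegrable g volume c d :=
      fun hc hd => hint.mono_set (uIcc_subset_uIcc (by rwa [uIcc_of_le hxb])
        (by rwa [uIcc_of_le hxb]))
    have hnonneg : 0 ≤ ∫ τ in y₁..y₂, g τ :=
      intervalIntegral.integral_nonneg h fun τ hτ => hg τ ⟨hy₁.1.trans hτ.1, hτ.2.trans hy₂.2⟩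
    have hadd := intervalIntegral.integral_add_adjacent_intervals
      (hsub ⟨le_rfl, hxb⟩ hy₁) (hsub hy₁ hy₂)
    simp only [F, neg_le_neg_iff, Real.exp_le_exp]
    linarith
  have hF_deriv : ∀ᵐ y ∂volume.restrict (Ioc x b),
      g y * Real.exp (-∫ τ in x..y, g τ) = deriv F y := by
    rw [ae_restrict_iff' measurableSet_Ioc]
    filter_upwards [hint.ae_hasDerivAt_integral] with y hy hyb
    have hyb' : y ∈ uIcc x b := by rw [uIcc_of_le hxb]; exact Ioc_subset_Icc_self hyb
    rw [(hy hyb' x left_mem_uIcc).fun_neg.exp.fun_neg.deriv]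
    ring
  have hF_nonneg : 0 ≤ᵐ[volume.restrict (Ioc x b)] deriv F := by
    filter_upwards [hF_deriv, ae_restrict_mem measurableSet_Ioc] with y hy hyb
    rw [← hy]
    exact mul_nonneg (hg y (Ioc_subset_Icc_self hyb)) (Real.exp_nonneg _)
  have hF_int : IntegrableOn (deriv F) (Ioc x b) :=
    (intervalIntegrable_iff_integrableOn_Ioc_of_le hxb).1 hF_mono.intervalIntegrable_deriv
  have hF_le : ∫ y in Ioc x b, deriv F y ≤ 1 := by
    rw [← intervalIntegral.integral_of_le hxb]
    refine hF_mono.intervalIntegral_deriv_mem_uIcc.2.trans (max_le zero_le_one ?_)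
    simp only [F, intervalIntegral.integral_same, neg_zero, Real.exp_zero]
    linarith [Real.exp_nonneg (-∫ τ in x..b, g τ)]
  calc ∫⁻ y in Ioc x b, ENNReal.ofReal (g y * Real.exp (-∫ τ in x..y, g τ))
      = ENNReal.ofReal (∫ y in Ioc x b, deriv F y) := by
        rw [ofReal_integral_eq_lintegral_ofReal hF_int hF_nonneg]
        exact lintegral_congr_ae (hF_deriv.mono fun y hy => congrArg ENNReal.ofReal hy)
    _ ≤ 1 := ENNReal.ofReal_le_one.2 hF_le

theorem setLIntegral_Ioi_mul_exp_neg_integral_le_one {g : ℝ → ℝ} {x : ℝ}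
    (hg : ∀ y ∈ Ici x, 0 ≤ g y) (hint : ∀ b ∈ Ici x, IntervalIntegrable g volume x b) :
    ∫⁻ y in Ioi x, ENNReal.ofReal (g y * Real.exp (-∫ τ in x..y, g τ)) ≤ 1 := by
  have hcover : ⋃ n : ℕ, Ioc x (x + n) = Ioi x :=
    iUnion_Ioc_eq_Ioi_self_iff.2 fun y _ => (exists_nat_ge (y - x)).imp fun n hn => by linarith
  have hmono : Monotone fun n : ℕ => Ioc x (x + n) := fun m n hmn =>
    Ioc_subset_Ioc_right (by gcongr)
  rw [← hcover, setLIntegral_iUnion_of_directed _ hmono.directed_le]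
  refine iSup_le fun n => ?_
  have hxn : x ≤ x + n := le_add_of_nonneg_right n.cast_nonneg
  exact setLIntegral_Ioc_mul_exp_neg_integral_le_one hxn (fun y hy => hg y hy.1) (hint _ hxn)

theorem one_add_rpow_mul_exp_neg_integral_le {α : ℝ} {ℓ : ℝ → ℝ} {x y : ℝ} (hx : -1 < x)
    (hxy : x ≤ y) (hℓ : IntervalIntegrable ℓ volume x y)
    (hbound : ∀ τ ∈ Icc x y, α / (1 + τ) ≤ ℓ τ) :
    (1 + y) ^ α * Real.exp (-∫ τ in x..y, ℓ τ) ≤ (1 + x) ^ α := by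
  have h1x : 0 < 1 + x := by linarith
  have h1y : 0 < 1 + y := by linarith
  have hlog : ∫ τ in x..y, α / (1 + τ) = α * Real.log (1 + y) - α * Real.log (1 + x) := by
    have h0 : (0 : ℝ) ∉ uIcc (1 + x) (1 + y) := by
      rw [uIcc_of_le (by linarith)]
      exact fun h => by linarith [h.1]
    simp only [div_eq_mul_inv, intervalIntegral.integral_const_mul,
      intervalIntegral.integral_comp_add_left (fun τ => τ⁻¹)]
    rw [integral_inv h0, Real.log_div h1y.ne' h1x.ne']
    ring
  have hmono : ∫ τ in x..y, α / (1 + τ) ≤ ∫ τ in x..y, ℓ τ := by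
    refine intervalIntegral.integral_mono_on hxy (ContinuousOn.intervalIntegrable ?_) hℓ hbound
    rw [uIcc_of_le hxy]
    exact continuousOn_const.div (by fun_prop) fun τ hτ => by linarith [hτ.1]
  calc (1 + y) ^ α * Real.exp (-∫ τ in x..y, ℓ τ)
      ≤ Real.exp (α * Real.log (1 + y)) *
          Real.exp (-(α * Real.log (1 + y) - α * Real.log (1 + x))) := by
        rw [Real.rpow_def_of_pos h1y, mul_comm (Real.log _)]
        gcongr
        linarith
    _ = (1 + x) ^ α := by
        rw [← Real.exp_add, Real.rpow_def_of_pos h1x, mul_comm (Real.log _)]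
        ring_nf

theorem LocallyIntegrableOn.intervalIntegrable_div {u r : ℝ → ℝ} {s : Set ℝ} {x y : ℝ}
    (hu : LocallyIntegrableOn u s) (hr : ContinuousOn r s) (hr₀ : ∀ z ∈ s, r z ≠ 0)
    (hxy : uIcc x y ⊆ s) : IntervalIntegrable (fun τ => u τ / r τ) volume x y := by
  simp only [div_eq_mul_inv]
  exact ((hu.integrableOn_compact_subset hxy isCompact_uIcc).mul_continuousOn
    ((hr.mono hxy).inv₀ fun z hz => hr₀ z (hxy hz)) isCompact_uIcc).intervalIntegrable

theorem div_one_add_le_div_of_le_mul {α C lam ρ τ : ℝ} (hα : 0 ≤ α) (hτ : 0 < 1 + τ)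
    (hρ : 0 < ρ) (hρC : ρ ≤ C * (1 + τ)) (hlam : α * C ≤ lam) : α / (1 + τ) ≤ lam / ρ := by
  rw [div_le_div_iff₀ hτ hρ]
  nlinarith [mul_le_mul_of_nonneg_left hρC hα, mul_le_mul_of_nonneg_right hlam hτ.le]

theorem aemeasurable_intervalIntegral_prod_of_nonneg {h : ℝ → ℝ} {s : Set ℝ} [OrdConnected s]
    (hs : MeasurableSet s) (hh : ∀ z ∈ s, 0 ≤ h z)
    (hint : ∀ x ∈ s, ∀ y ∈ s, IntervalIntegrable h volume x y) :
    AEMeasurable (fun p : ℝ × ℝ => ∫ τ in p.1..p.2, h τ)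
      ((volume.restrict s).prod (volume.restrict s)) := by
  rcases s.eq_empty_or_nonempty with rfl | ⟨c, hc⟩
  · simp
  set H : ℝ → ℝ := fun y => ∫ τ in c..y, h τ
  have hdiff : ∀ x ∈ s, ∀ y ∈ s, ∫ τ in x..y, h τ = H y - H x := fun x hx y hy =>
    (intervalIntegral.integral_interval_sub_left (hint c hc y hy) (hint c hc x hx)).symm
  have hH : MonotoneOn H s := fun x hx y hy hxy => by
    have : 0 ≤ ∫ τ in x..y, h τ :=
      intervalIntegral.integral_nonneg hxy fun τ hτ => hh τ (OrdConnected.out ‹_› hx hy hτ)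
    linarith [hdiff x hx y hy]
  have hH_meas : AEMeasurable H (volume.restrict s) := aemeasurable_restrict_of_monotoneOn hs hH
  refine (hH_meas.comp_snd.sub hH_meas.comp_fst).congr ?_
  rw [Measure.prod_restrict, Filter.EventuallyEq, ae_restrict_iff' (hs.prod hs)]
  exact Filter.Eventually.of_forall fun p hp => (hdiff p.1 hp.1 p.2 hp.2).symm

theorem lintegral_lintegral_Iio_swap {μ : Measure ℝ} [SFinite μ] {F : ℝ → ℝ → ENNReal}
    (hF : AEMeasurable (Function.uncurry F) (μ.prod μ)) :
    ∫⁻ y, ∫⁻ x in Iio y, F x y ∂μ ∂μ = ∫⁻ x, ∫⁻ y in Ioi x, F x y ∂μ ∂μ := by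
  have hS : MeasurableSet {p : ℝ × ℝ | p.1 < p.2} :=
    measurableSet_lt measurable_fst measurable_snd
  have hswap := lintegral_lintegral_swap (μ := μ) (ν := μ)
    (f := fun x y => {p : ℝ × ℝ | p.1 < p.2}.indicator (Function.uncurry F) (x, y))
    (hF.indicator hS)
  simp only [← lintegral_indicator measurableSet_Iio, ← lintegral_indicator measurableSet_Ioi]
  convert hswap.symm using 4 <;> simp [indicator]

theorem setLIntegral_Ioi_lintegral_Ioo_swap {F : ℝ → ℝ → ENNReal}
    (hF : AEMeasurable (Function.uncurry F)
      ((volume.restrict (Ioi 0)).prod (volume.restrict (Ioi 0)))) :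
    ∫⁻ y in Ioi 0, ∫⁻ x in Ioo 0 y, F x y = ∫⁻ x in Ioi 0, ∫⁻ y in Ioi x, F x y := by
  have hswap := lintegral_lintegral_Iio_swap hF
  simp only [Measure.restrict_restrict measurableSet_Iio, Measure.restrict_restrict
    measurableSet_Ioi, Iio_inter_Ioi] at hswap
  rw [hswap]
  refine setLIntegral_congr_fun measurableSet_Ioi fun x (hx : 0 < x) => ?_
  rw [Ioi_inter_Ioi, max_eq_left hx.le]

noncomputable def survival (lam : ℝ) (a r : ℝ → ℝ) (x y : ℝ) : ℝ :=
  Real.exp (-∫ τ in x..y, (lam + a τ) / r τ)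

theorem ofReal_resolvent_mul_le {α lam y : ℝ} {a r f : ℝ → ℝ} (hy : 0 < y) (hry : 0 < r y)
    (hay : 0 ≤ a y) (hf : ∀ x ∈ Ioo 0 y, 0 ≤ f x) :
    ENNReal.ofReal (((1 / r y) * ∫ x in Ioo 0 y, survival lam a r x y * f x) * a y * (1 + y) ^ α)
      ≤ ∫⁻ x in Ioo 0 y,
          ENNReal.ofReal (f x * (a y * (1 + y) ^ α / r y * survival lam a r x y)) := by
  have hw : 0 ≤ a y * (1 + y) ^ α / r y :=
    div_nonneg (mul_nonneg hay (Real.rpow_nonneg (by linarith) _)) hry.le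
  calc _ = ENNReal.ofReal
        (∫ x in Ioo 0 y, f x * (a y * (1 + y) ^ α / r y * survival lam a r x y)) := by
        rw [← integral_const_mul, ← integral_mul_const, ← integral_mul_const]
        congr 2 with x
        ring
    _ ≤ _ := ofReal_integral_le_lintegral_ofReal <|
        (ae_restrict_iff' measurableSet_Ioo).2 <| ae_of_all _ fun x hx =>
          mul_nonneg (hf x hx) (mul_nonneg hw (Real.exp_nonneg _))

theorem setLIntegral_Ioi_mul_survival_le {α C lam : ℝ} {a r : ℝ → ℝ} (hα : 0 ≤ α)
    (hr_cont : ContinuousOn r (Ioi 0)) (hr_pos : ∀ z > (0 : ℝ), 0 < r z)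
    (hr_le : ∀ z > (0 : ℝ), r z ≤ C * (1 + z)) (ha_nonneg : ∀ z > (0 : ℝ), 0 ≤ a z)
    (ha_loc : LocallyIntegrableOn a (Ioi 0)) (hlam : α * C ≤ lam) {x : ℝ} (hx : 0 < x) :
    ∫⁻ y in Ioi x, ENNReal.ofReal (a y * (1 + y) ^ α / r y * survival lam a r x y)
      ≤ ENNReal.ofReal ((1 + x) ^ α) := by
  have hint : ∀ {u : ℝ → ℝ}, LocallyIntegrableOn u (Ioi 0) → ∀ y ∈ Ici x,
      IntervalIntegrable (fun τ => u τ / r τ) volume x y := fun hu y hy =>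
    LocallyIntegrableOn.intervalIntegrable_div hu hr_cont (fun z hz => (hr_pos z hz).ne')
      (ordConnected_Ioi.uIcc_subset hx (hx.trans_le hy))
  set G : ℝ → ℝ := fun y => a y / r y * Real.exp (-∫ τ in x..y, a τ / r τ)
  have hpt : ∀ y ∈ Ioi x, ENNReal.ofReal (a y * (1 + y) ^ α / r y * survival lam a r x y) ≤
      ENNReal.ofReal ((1 + x) ^ α) * ENNReal.ofReal (G y) := by
    intro y (hy : x < y)
    have hsplit : ∫ τ in x..y, (lam + a τ) / r τ
        = (∫ τ in x..y, lam / r τ) + ∫ τ in x..y, a τ / r τ := by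
      simp only [add_div]
      exact intervalIntegral.integral_add (hint (locallyIntegrableOn_const lam) y hy.le)
        (hint ha_loc y hy.le)
    have hweight := one_add_rpow_mul_exp_neg_integral_le (by linarith) hy.le
      (hint (locallyIntegrableOn_const lam) y hy.le) fun τ hτ =>
        div_one_add_le_div_of_le_mul hα (by linarith [hτ.1]) (hr_pos τ (by linarith [hτ.1]))
          (hr_le τ (by linarith [hτ.1])) hlam
    have hG : 0 ≤ G y := mul_nonneg
      (div_nonneg (ha_nonneg y (hx.trans hy)) (hr_pos y (hx.trans hy)).le) (Real.exp_nonneg _)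
    rw [← ENNReal.ofReal_mul (by positivity)]
    refine ENNReal.ofReal_le_ofReal ?_
    calc a y * (1 + y) ^ α / r y * survival lam a r x y
        = ((1 + y) ^ α * Real.exp (-∫ τ in x..y, lam / r τ)) * G y := by
          rw [survival, hsplit, neg_add, Real.exp_add]
          ring
      _ ≤ (1 + x) ^ α * G y := by gcongr
  calc _ ≤ ∫⁻ y in Ioi x, ENNReal.ofReal ((1 + x) ^ α) * ENNReal.ofReal (G y) :=
        setLIntegral_mono' measurableSet_Ioi hpt
    _ ≤ ENNReal.ofReal ((1 + x) ^ α) * 1 := by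
        rw [lintegral_const_mul' _ _ ENNReal.ofReal_ne_top]
        gcongr
        exact setLIntegral_Ioi_mul_exp_neg_integral_le_one
          (fun y hy => div_nonneg (ha_nonneg y (hx.trans_le hy)) (hr_pos y (hx.trans_le hy)).le)
          fun y hy => hint ha_loc y hy
    _ = ENNReal.ofReal ((1 + x) ^ α) := mul_one _

theorem stmt2_general (α C : ℝ) (hα : 0 < α) (r : ℝ → ℝ)
    (hr_cont : ContinuousOn r (Ioi (0 : ℝ)))
    (hr_pos : ∀ z > (0 : ℝ), 0 < r z) (hr_le : ∀ z > (0 : ℝ), r z ≤ C * (1 + z))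
    (a : ℝ → ℝ) (ha_meas : Measurable a) (ha_nonneg : ∀ x > (0 : ℝ), 0 ≤ a x)
    (ha_loc : LocallyIntegrableOn a (Ioi (0 : ℝ)))
    (lam : ℝ) (hlam : α * C ≤ lam)
    (f : ℝ → ℝ) (hf_meas : Measurable f) (hf_nonneg : ∀ x > (0 : ℝ), 0 ≤ f x) :
    ∫⁻ y in Ioi (0 : ℝ),
        ENNReal.ofReal
          (((1 / r y) * ∫ x in Ioo (0 : ℝ) y,
              Real.exp (-(∫ τ in x..y, (lam + a τ) / r τ)) * f x) * a y * (1 + y) ^ α)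
      ≤ ∫⁻ x in Ioi (0 : ℝ), ENNReal.ofReal (f x * (1 + x) ^ α) := by
  set w : ℝ → ℝ := fun y => a y * (1 + y) ^ α / r y
  set K : ℝ → ℝ → ENNReal := fun x y => ENNReal.ofReal (f x * (w y * survival lam a r x y))
  have hlam₀ : 0 ≤ lam := by nlinarith [hr_pos 1 one_pos, hr_le 1 one_pos]
  have hK : AEMeasurable (Function.uncurry K)
      ((volume.restrict (Ioi 0)).prod (volume.restrict (Ioi 0))) := by
    have hΛ := aemeasurable_intervalIntegral_prod_of_nonneg measurableSet_Ioi
      (fun z (hz : 0 < z) => div_nonneg (add_nonneg hlam₀ (ha_nonneg z hz)) (hr_pos z hz).le)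
      fun x hx y hy => LocallyIntegrableOn.intervalIntegrable_div
        ((locallyIntegrableOn_const lam).add ha_loc) hr_cont (fun z hz => (hr_pos z hz).ne')
        (ordConnected_Ioi.uIcc_subset hx hy)
    have hw : AEMeasurable w (volume.restrict (Ioi 0)) :=
      (ha_meas.aemeasurable.mul (by fun_prop)).div (hr_cont.aemeasurable measurableSet_Ioi)
    exact ENNReal.measurable_ofReal.comp_aemeasurable (hf_meas.aemeasurable.comp_fst.mul
      (hw.comp_snd.mul (Real.measurable_exp.comp_aemeasurable hΛ.neg)))
  calc _ ≤ ∫⁻ y in Ioi 0, ∫⁻ x in Ioo 0 y, K x y :=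
        setLIntegral_mono' measurableSet_Ioi fun y (hy : 0 < y) =>
          ofReal_resolvent_mul_le hy (hr_pos y hy) (ha_nonneg y hy) fun x hx => hf_nonneg x hx.1
    _ = ∫⁻ x in Ioi 0, ∫⁻ y in Ioi x, K x y := setLIntegral_Ioi_lintegral_Ioo_swap hK
    _ ≤ _ := setLIntegral_mono' measurableSet_Ioi fun x (hx : 0 < x) => by
        simp only [K, ENNReal.ofReal_mul (hf_nonneg x hx)]
        rw [lintegral_const_mul' _ _ ENNReal.ofReal_ne_top]
        gcongr
        exact setLIntegral_Ioi_mul_survival_le hα.le hr_cont hr_pos hr_le ha_nonneg ha_loc hlam hx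

/-- Smoothing effect of the resolvent of the growth–absorption semigroup in
`X_{0,α} = L¹((0,∞), (1+x)^α dx)`: if `0 < r(z) ≤ C(1+z)`, `a ≥ 0` is locally integrable on
`(0,∞)`, `λ ≥ αC` and `f ≥ 0` has finite `X_{0,α}`-norm, then
`∫₀^∞ (R_λ f)(y) a(y) (1+y)^α dy ≤ ∫₀^∞ f(x) (1+x)^α dx`, where
`(R_λ f)(y) = (1/r(y)) ∫₀^y exp(−∫ₓ^y (λ+a(τ))/r(τ) dτ) f(x) dx`. -/
theorem stmt2 (α C : ℝ) (hα : 0 < α) (hC : 0 < C) (r : ℝ → ℝ)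
    (hr_cont : ContinuousOn r (Ioi (0 : ℝ)))
    (hr_pos : ∀ z > (0 : ℝ), 0 < r z) (hr_le : ∀ z > (0 : ℝ), r z ≤ C * (1 + z))
    (a : ℝ → ℝ) (ha_meas : Measurable a) (ha_nonneg : ∀ x > (0 : ℝ), 0 ≤ a x)
    (ha_loc : LocallyIntegrableOn a (Ioi (0 : ℝ)))
    (lam : ℝ) (hlam : α * C ≤ lam)
    (f : ℝ → ℝ) (hf_meas : Measurable f) (hf_nonneg : ∀ x > (0 : ℝ), 0 ≤ f x)
    (hf_int : ∫⁻ x in Ioi (0 : ℝ), ENNReal.ofReal (f x * (1 + x) ^ α) < ⊤) :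
    ∫⁻ y in Ioi (0 : ℝ),
        ENNReal.ofReal
          (((1 / r y) * ∫ x in Ioo (0 : ℝ) y,
              Real.exp (-(∫ τ in x..y, (lam + a τ) / r τ)) * f x) * a y * (1 + y) ^ α)
      ≤ ∫⁻ x in Ioi (0 : ℝ), ENNReal.ofReal (f x * (1 + x) ^ α) :=
  stmt2_general α C hα r hr_cont hr_pos hr_le a ha_meas ha_nonneg ha_loc lam hlam f hf_meas
    hf_nonneg
end

section
/- Let r : (0,∞) → ℝ be continuous and positive with ∫₀^1 dτ/r(τ) < ∞ and ∫₁^∞ dτ/r(τ) = ∞, and set G(y) = ∫₀^y dτ/r(τ), so that G is a strictly increasing continuous bijection of (0,∞) onto (0,∞); let G⁻¹ denote its inverse. Fix t > 0 and for x > 0 set y(x,t) := G⁻¹(G(x)+t). Then y(x,t) → G⁻¹(t) > 0 as x → 0⁺, and consequently sup_{x>0} y(x,t)/x = +∞. -/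
/-!
Integrability of `1 / r` near `0` makes `G x → 0` as `x → 0⁺`, so `G x + t` decreases to `t`.
A right inverse of a strictly increasing function is monotone and right-continuous, hence
`y(x,t) = Ginv (G x + t) → Ginv t > 0`, and a positive limit divided by `x → 0⁺` is unbounded.
-/

open MeasureTheory Set Filter Topology

theorem tendsto_setIntegral_Ioc_nhdsGT {E : Type*} [NormedAddCommGroup E] [NormedSpace ℝ E]
    {f : ℝ → E} {a b : ℝ} (hab : a < b) (hf : IntegrableOn f (Ioc a b)) :
    Tendsto (fun x => ∫ τ in Ioc a x, f τ) (𝓝[>] a) (𝓝 0) := by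
  have hcont := intervalIntegral.continuousOn_primitive
    ((integrableOn_Icc_iff_integrableOn_Ioc (μ := volume)).2 hf) a (left_mem_Icc.2 hab.le)
  rw [ContinuousWithinAt, Ioc_self, Measure.restrict_empty, integral_zero_measure,
    nhdsWithin_Icc_eq_nhdsGE hab] at hcont
  exact hcont.mono_left (nhdsWithin_mono a Ioi_subset_Ici_self)

section RightInverse

variable {G Ginv : ℝ → ℝ}

theorem monotoneOn_of_rightInverse (hG : StrictMonoOn G (Ioi 0))
    (hGinv_pos : ∀ s > 0, 0 < Ginv s) (hGinv_right : ∀ s > 0, G (Ginv s) = s) :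
    MonotoneOn Ginv (Ioi 0) := by
  intro s₁ hs₁ s₂ hs₂ h
  rwa [← hG.le_iff_le (hGinv_pos s₁ hs₁) (hGinv_pos s₂ hs₂), hGinv_right s₁ hs₁,
    hGinv_right s₂ hs₂]

theorem tendsto_rightInverse_nhdsGE (hG : StrictMonoOn G (Ioi 0))
    (hGinv_pos : ∀ s > 0, 0 < Ginv s) (hGinv_right : ∀ s > 0, G (Ginv s) = s)
    {s : ℝ} (hs : 0 < s) :
    Tendsto Ginv (𝓝[≥] s) (𝓝 (Ginv s)) := by
  refine tendsto_order.2 ⟨fun b hb => ?_, fun c hc => ?_⟩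
  · filter_upwards [self_mem_nhdsWithin] with u hu
    exact hb.trans_le (monotoneOn_of_rightInverse hG hGinv_pos hGinv_right hs
      (hs.trans_le hu) hu)
  · have hc0 : 0 < c := (hGinv_pos s hs).trans hc
    -- `G c > s`, and any `u ∈ [s, G c)` has `G (Ginv u) = u < G c`, hence `Ginv u < c`.
    have hsGc : s < G c := by
      simpa only [hGinv_right s hs] using hG (hGinv_pos s hs) hc0 hc
    filter_upwards [self_mem_nhdsWithin, nhdsWithin_le_nhds (Iio_mem_nhds hsGc)] with u hu hGu
    have hu0 : 0 < u := hs.trans_le hu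
    rw [← hG.lt_iff_lt (hGinv_pos u hu0) hc0, hGinv_right u hu0]
    exact hGu

end RightInverse

theorem tendsto_div_self_nhdsGT_zero_atTop {f : ℝ → ℝ} {a : ℝ} (ha : 0 < a)
    (hf : Tendsto f (𝓝[>] 0) (𝓝 a)) : Tendsto (fun x => f x / x) (𝓝[>] 0) atTop := by
  simpa only [div_eq_mul_inv] using hf.pos_mul_atTop ha tendsto_inv_nhdsGT_zero

theorem stmt7_general (r : ℝ → ℝ)
    (hr_pos : ∀ τ > (0 : ℝ), 0 < r τ)
    (h_zero : IntegrableOn (fun τ => 1 / r τ) (Ioc (0 : ℝ) 1))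
    (G Ginv : ℝ → ℝ)
    (hG : ∀ y, G y = ∫ τ in Ioc (0 : ℝ) y, 1 / r τ)
    (hG_mono : StrictMonoOn G (Ioi (0 : ℝ)))
    (hGinv_pos : ∀ s > (0 : ℝ), 0 < Ginv s)
    (hGinv_right : ∀ s > (0 : ℝ), G (Ginv s) = s)
    (t : ℝ) (ht : 0 < t) :
    Tendsto (fun x => Ginv (G x + t)) (nhdsWithin 0 (Ioi (0 : ℝ))) (nhds (Ginv t)) ∧
      0 < Ginv t ∧
      ∀ M : ℝ, ∃ x > (0 : ℝ), M < Ginv (G x + t) / x := by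
  have hG_nonneg : ∀ x > (0 : ℝ), 0 ≤ G x := fun x _ => (hG x).symm ▸
    setIntegral_nonneg measurableSet_Ioc fun τ hτ => one_div_nonneg.2 (hr_pos τ hτ.1).le
  have hG_zero : Tendsto G (𝓝[>] 0) (𝓝 0) := by
    simpa only [← funext hG] using tendsto_setIntegral_Ioc_nhdsGT one_pos h_zero
  have hshift : Tendsto (fun x => G x + t) (𝓝[>] 0) (𝓝[≥] t) := by
    refine tendsto_nhdsWithin_iff.2 ⟨by simpa using hG_zero.add_const t, ?_⟩
    filter_upwards [self_mem_nhdsWithin] with x hx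
    exact le_add_of_nonneg_left (hG_nonneg x hx)
  have hlim := (tendsto_rightInverse_nhdsGE hG_mono hGinv_pos hGinv_right ht).comp hshift
  have hpos := hGinv_pos t ht
  refine ⟨hlim, hpos, fun M => ?_⟩
  exact (((tendsto_div_self_nhdsGT_zero_atTop hpos hlim).eventually_gt_atTop M).and
    self_mem_nhdsWithin).exists.imp fun x hx => ⟨hx.2, hx.1⟩

/-- Obstruction to generation in `X_α` when `∫₀¹ dτ/r(τ) < ∞` and `∫₁^∞ dτ/r(τ) = ∞`:
with `G(y) = ∫₀^y dτ/r(τ)` a strictly increasing continuous bijection of `(0,∞)` onto `(0,∞)`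
with inverse `Ginv`, and `t > 0`, the forward characteristic `y(x,t) = Ginv(G(x)+t)` tends to
`Ginv(t) > 0` as `x → 0⁺`, and consequently `sup_{x>0} y(x,t)/x = +∞`. -/
theorem stmt7 (r : ℝ → ℝ) (hr_cont : ContinuousOn r (Ioi (0 : ℝ)))
    (hr_pos : ∀ τ > (0 : ℝ), 0 < r τ)
    (h_zero : IntegrableOn (fun τ => 1 / r τ) (Ioc (0 : ℝ) 1))
    (h_infty : ¬ IntegrableOn (fun τ => 1 / r τ) (Ioi (1 : ℝ)))
    (G Ginv : ℝ → ℝ)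
    (hG : ∀ y, G y = ∫ τ in Ioc (0 : ℝ) y, 1 / r τ)
    (hG_mono : StrictMonoOn G (Ioi (0 : ℝ)))
    (hG_cont : ContinuousOn G (Ioi (0 : ℝ)))
    (hGinv_pos : ∀ s > (0 : ℝ), 0 < Ginv s)
    (hGinv_right : ∀ s > (0 : ℝ), G (Ginv s) = s)
    (hGinv_left : ∀ y > (0 : ℝ), Ginv (G y) = y)
    (t : ℝ) (ht : 0 < t) :
    Tendsto (fun x => Ginv (G x + t)) (nhdsWithin 0 (Ioi (0 : ℝ))) (nhds (Ginv t)) ∧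
      0 < Ginv t ∧
      ∀ M : ℝ, ∃ x > (0 : ℝ), M < Ginv (G x + t) / x :=
  stmt7_general r hr_pos h_zero G Ginv hG hG_mono hGinv_pos hGinv_right t ht
end

section
/- Let y > 0 and let w : (0,y) → [0,∞) be measurable with ∫₀^y x w(x) dx = y. Then for every α with 0 < α ≤ 1, ∫₀^y (1+x)^α w(x) dx ≥ (1+y)^α. -/
open MeasureTheory Set

/- Since `x ↦ (1 + x) ^ α / x` is antitone on `(0, ∞)` for `α ≤ 1`, on `(0, y)` the weight
`(1 + x) ^ α` dominates `c x` with `c = (1 + y) ^ α / y`; integrating against `w` and using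
`∫ x w = y` gives `∫ (1 + x) ^ α w ≥ c y = (1 + y) ^ α`. -/

theorem antitoneOn_one_add_rpow_div {α : ℝ} (hα : α ≤ 1) :
    AntitoneOn (fun x : ℝ => (1 + x) ^ α / x) (Ioi 0) := by
  intro x (hx : 0 < x) y (hy : 0 < y) hxy
  have h1x : 0 < 1 + x := by linarith
  have hratio : 1 ≤ (1 + y) / (1 + x) := (one_le_div h1x).2 (by linarith)
  calc (1 + y) ^ α / y = ((1 + y) / (1 + x)) ^ α * (1 + x) ^ α / y := by
        rw [Real.div_rpow (by linarith) h1x.le, div_mul_cancel₀ _ (Real.rpow_pos_of_pos h1x α).ne']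
    _ ≤ (1 + y) / (1 + x) * (1 + x) ^ α / y := by
        gcongr; exact Real.rpow_le_self_of_one_le hratio hα
    _ ≤ (1 + x) ^ α / x := by
        rw [div_mul_eq_mul_div, div_div, div_le_div_iff₀ (by positivity) hx]
        have : 0 ≤ (1 + x) ^ α := (Real.rpow_pos_of_pos h1x α).le
        nlinarith [mul_nonneg this (sub_nonneg.2 hxy)]

theorem stmt8_general (y : ℝ) (hy : 0 < y) (w : ℝ → ℝ)
    (hw_nonneg : ∀ x ∈ Ioo (0 : ℝ) y, 0 ≤ w x)
    (hmass : ∫⁻ x in Ioo (0 : ℝ) y, ENNReal.ofReal (x * w x) = ENNReal.ofReal y) :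
    ∀ α : ℝ, 0 < α → α ≤ 1 →
      ENNReal.ofReal ((1 + y) ^ α)
        ≤ ∫⁻ x in Ioo (0 : ℝ) y, ENNReal.ofReal ((1 + x) ^ α * w x) := by
  intro α _ hα
  set c := (1 + y) ^ α / y
  have hc : 0 ≤ c := by positivity
  have hweight : ∀ x ∈ Ioo 0 y, c * x ≤ (1 + x) ^ α := fun x hx =>
    (le_div_iff₀ hx.1).1 (antitoneOn_one_add_rpow_div hα hx.1 hy hx.2.le)
  calc ENNReal.ofReal ((1 + y) ^ α)
      = ENNReal.ofReal c * ∫⁻ x in Ioo 0 y, ENNReal.ofReal (x * w x) := by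
        rw [hmass, ← ENNReal.ofReal_mul hc, div_mul_cancel₀ _ hy.ne']
    _ = ∫⁻ x in Ioo 0 y, ENNReal.ofReal (c * x * w x) := by
        rw [← lintegral_const_mul' _ _ ENNReal.ofReal_ne_top]
        simp only [← ENNReal.ofReal_mul hc, mul_assoc]
    _ ≤ ∫⁻ x in Ioo 0 y, ENNReal.ofReal ((1 + x) ^ α * w x) :=
        setLIntegral_mono' measurableSet_Ioo fun x hx =>
          ENNReal.ofReal_le_ofReal (mul_le_mul_of_nonneg_right (hweight x hx) (hw_nonneg x hx))

/-- For `y > 0` and a measurable nonnegative kernel `w` on `(0,y)` with mass conservation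
`∫₀^y x w(x) dx = y`, one has `∫₀^y (1+x)^α w(x) dx ≥ (1+y)^α` for every `0 < α ≤ 1`. -/
theorem stmt8 (y : ℝ) (hy : 0 < y) (w : ℝ → ℝ) (hw_meas : Measurable w)
    (hw_nonneg : ∀ x ∈ Ioo (0 : ℝ) y, 0 ≤ w x)
    (hmass : ∫⁻ x in Ioo (0 : ℝ) y, ENNReal.ofReal (x * w x) = ENNReal.ofReal y) :
    ∀ α : ℝ, 0 < α → α ≤ 1 →
      ENNReal.ofReal ((1 + y) ^ α)
        ≤ ∫⁻ x in Ioo (0 : ℝ) y, ENNReal.ofReal ((1 + x) ^ α * w x) :=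
  stmt8_general y hy w hw_nonneg hmass
end

section
/- Let b : (0,∞)×(0,∞) → [0,∞) be measurable with b(x,y) = 0 for x ≥ y, and let η ≥ 1 be such that for every α > η there exists c_α > 0 with ∫₀^y b(x,y) dx ≤ c_α (1+y)^α for all y > 0. Then for every α > η, limsup_{y→+∞} (∫₀^y (1+x)^α b(x,y) dx) / (1+y)^α ≤ limsup_{y→+∞} (∫₀^y x^α b(x,y) dx) / y^α, where the limits superior are taken in [0,∞]. -/
open MeasureTheory Set Filter
open scoped ENNReal Topology

/-!
For `ε > 0` one has `(1 + x)^α ≤ (1 + ε)^α x^α + (1 + 1/ε)^α` (split at `x = 1/ε`). Integrating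
against `b(·, y)` and using `y^α ≤ (1 + y)^α` bounds `n_{1,α}(y)/(1 + y)^α` by
`(1 + ε)^α n_α(y)/y^α` plus `(1 + 1/ε)^α ∫₀^y b(x,y) dx / (1 + y)^α`. Applying the growth hypothesis
with an exponent `β ∈ (η, α)` makes the last term `O((1 + y)^(β - α)) → 0`, so the left limsup is
at most `(1 + ε)^α` times the right one; let `ε → 0`.
-/

lemma one_add_rpow_le {α ε x : ℝ} (hα : 0 ≤ α) (hε : 0 < ε) (hx : 0 ≤ x) :
    (1 + x) ^ α ≤ (1 + ε) ^ α * x ^ α + (1 + ε⁻¹) ^ α := by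
  rcases le_total x ε⁻¹ with hx' | hx'
  · have : (1 + x) ^ α ≤ (1 + ε⁻¹) ^ α := Real.rpow_le_rpow (by positivity) (by linarith) hα
    have : 0 ≤ (1 + ε) ^ α * x ^ α := by positivity
    linarith
  · have hεx : 1 ≤ ε * x := (inv_le_iff_one_le_mul₀' hε).1 hx'
    calc (1 + x) ^ α ≤ ((1 + ε) * x) ^ α := Real.rpow_le_rpow (by positivity) (by linarith) hα
      _ = (1 + ε) ^ α * x ^ α := Real.mul_rpow (by positivity) hx
      _ ≤ _ := le_add_of_nonneg_right (by positivity)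

lemma setLIntegral_one_add_rpow_mul_le {μ : Measure ℝ} {s : Set ℝ} (hs : MeasurableSet s)
    (hs₀ : s ⊆ Ici 0) {f : ℝ → ℝ} (hf : Measurable f) {α ε : ℝ} (hα : 0 ≤ α) (hε : 0 < ε) :
    ∫⁻ x in s, ENNReal.ofReal ((1 + x) ^ α * f x) ∂μ ≤
      ENNReal.ofReal ((1 + ε) ^ α) * ∫⁻ x in s, ENNReal.ofReal (x ^ α * f x) ∂μ +
        ENNReal.ofReal ((1 + ε⁻¹) ^ α) * ∫⁻ x in s, ENNReal.ofReal (f x) ∂μ := by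
  rw [← lintegral_const_mul' _ _ ENNReal.ofReal_ne_top,
    ← lintegral_const_mul' _ _ ENNReal.ofReal_ne_top, ← lintegral_add_right _ (by fun_prop)]
  refine setLIntegral_mono' hs fun x hx => ?_
  have hx₀ : 0 ≤ x := hs₀ hx
  calc ENNReal.ofReal ((1 + x) ^ α * f x)
      = ENNReal.ofReal ((1 + x) ^ α) * ENNReal.ofReal (f x) := ENNReal.ofReal_mul (by positivity)
    _ ≤ ENNReal.ofReal ((1 + ε) ^ α * x ^ α + (1 + ε⁻¹) ^ α) * ENNReal.ofReal (f x) := by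
        gcongr; exact one_add_rpow_le hα hε hx₀
    _ = _ := by
        rw [ENNReal.ofReal_add (by positivity) (by positivity), ENNReal.ofReal_mul (by positivity),
          ENNReal.ofReal_mul (by positivity)]
        ring

lemma setLIntegral_Ioo_one_add_rpow_mul_div_le {f : ℝ → ℝ} (hf : Measurable f) {α ε y : ℝ}
    (hα : 0 ≤ α) (hε : 0 < ε) (hy : 0 < y) :
    (∫⁻ x in Ioo 0 y, ENNReal.ofReal ((1 + x) ^ α * f x)) / ENNReal.ofReal ((1 + y) ^ α) ≤
      ENNReal.ofReal ((1 + ε) ^ α) *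
          ((∫⁻ x in Ioo 0 y, ENNReal.ofReal (x ^ α * f x)) / ENNReal.ofReal (y ^ α)) +
        ENNReal.ofReal ((1 + ε⁻¹) ^ α) *
          ((∫⁻ x in Ioo 0 y, ENNReal.ofReal (f x)) / ENNReal.ofReal ((1 + y) ^ α)) := by
  refine (ENNReal.div_le_div_right (setLIntegral_one_add_rpow_mul_le measurableSet_Ioo
    (fun _ hx => hx.1.le) hf hα hε) _).trans ?_
  rw [ENNReal.add_div, mul_div_assoc, mul_div_assoc]
  gcongr
  linarith

lemma tendsto_div_ofReal_one_add_rpow_atTop {N : ℝ → ℝ≥0∞} {c α β : ℝ} (hβα : β < α)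
    (hN : ∀ y > 0, N y ≤ ENNReal.ofReal (c * (1 + y) ^ β)) :
    Tendsto (fun y => N y / ENNReal.ofReal ((1 + y) ^ α)) atTop (𝓝 0) := by
  have hdecay : Tendsto (fun y : ℝ => ENNReal.ofReal (c * (1 + y) ^ (β - α))) atTop (𝓝 0) := by
    have h := ((tendsto_rpow_neg_atTop (sub_pos.2 hβα)).comp
      (tendsto_atTop_add_const_left _ 1 tendsto_id)).const_mul c
    simpa [Function.comp_def] using (ENNReal.continuous_ofReal.tendsto _).comp h
  refine tendsto_of_tendsto_of_tendsto_of_le_of_le' tendsto_const_nhds hdecay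
    (Eventually.of_forall fun _ => zero_le) ?_
  filter_upwards [eventually_gt_atTop 0] with y hy
  have hy₁ : 0 < 1 + y := by linarith
  calc N y / ENNReal.ofReal ((1 + y) ^ α)
      ≤ ENNReal.ofReal (c * (1 + y) ^ β) / ENNReal.ofReal ((1 + y) ^ α) :=
        ENNReal.div_le_div_right (hN y hy) _
    _ = ENNReal.ofReal (c * (1 + y) ^ (β - α)) := by
        rw [← ENNReal.ofReal_div_of_pos (by positivity), mul_div_assoc, Real.rpow_sub hy₁]

lemma ENNReal.limsup_le_mul_limsup_of_le_add {α : Type*} {l : Filter α}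
    {f g h : α → ℝ≥0∞} {k : ℝ≥0∞} (hk : k ≠ ⊤) (hfg : ∀ᶠ y in l, f y ≤ k * g y + h y)
    (hh : Tendsto h l (𝓝 0)) : limsup f l ≤ k * limsup g l :=
  calc limsup f l ≤ limsup ((fun y => k * g y) + h) l := limsup_le_limsup hfg
    _ = k * limsup g l := by
        rw [ENNReal.limsup_add_of_right_tendsto_zero hh, ENNReal.limsup_const_mul_of_ne_top hk]

lemma ENNReal.le_of_forall_pos_le_one_add_rpow_mul {a b : ℝ≥0∞} {α : ℝ}
    (h : ∀ ε > 0, a ≤ ENNReal.ofReal ((1 + ε) ^ α) * b) : a ≤ b := by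
  have hlim : Tendsto (fun ε : ℝ => ENNReal.ofReal ((1 + ε) ^ α) * b) (𝓝[>] 0) (𝓝 b) := by
    have h₁ : ContinuousAt (fun ε : ℝ => ENNReal.ofReal ((1 + ε) ^ α)) 0 :=
      ENNReal.continuous_ofReal.continuousAt.comp
        ((continuousAt_const.add continuousAt_id).rpow_const (Or.inl (by norm_num)))
    simpa using ENNReal.Tendsto.mul_const (h₁.tendsto.mono_left nhdsWithin_le_nhds)
      (Or.inl (by simp))
  exact ge_of_tendsto hlim (eventually_nhdsWithin_of_forall h)

theorem stmt12_general (b : ℝ → ℝ → ℝ) (hb_meas : Measurable (Function.uncurry b))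
    (η : ℝ) (hη : 1 ≤ η)
    (hpoly : ∀ α > η, ∃ c > (0 : ℝ), ∀ y > (0 : ℝ),
        ∫⁻ x in Ioo (0 : ℝ) y, ENNReal.ofReal (b x y)
          ≤ ENNReal.ofReal (c * (1 + y) ^ α)) :
    ∀ α > η,
      limsup (fun y : ℝ =>
          (∫⁻ x in Ioo (0 : ℝ) y, ENNReal.ofReal ((1 + x) ^ α * b x y))
            / ENNReal.ofReal ((1 + y) ^ α)) atTop
        ≤ limsup (fun y : ℝ =>
          (∫⁻ x in Ioo (0 : ℝ) y, ENNReal.ofReal (x ^ α * b x y))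
            / ENNReal.ofReal (y ^ α)) atTop := by
  intro α hα
  have hα₀ : 0 ≤ α := by linarith
  obtain ⟨β, hηβ, hβα⟩ := exists_between hα
  obtain ⟨c, -, hc⟩ := hpoly β hηβ
  have hb : ∀ y, Measurable fun x => b x y := fun y =>
    hb_meas.comp (measurable_id.prodMk measurable_const)
  refine ENNReal.le_of_forall_pos_le_one_add_rpow_mul (α := α) fun ε hε => ?_
  have hdecay : Tendsto (fun y => ENNReal.ofReal ((1 + ε⁻¹) ^ α) *
      ((∫⁻ x in Ioo 0 y, ENNReal.ofReal (b x y)) / ENNReal.ofReal ((1 + y) ^ α))) atTop (𝓝 0) := by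
    simpa using ENNReal.Tendsto.const_mul (tendsto_div_ofReal_one_add_rpow_atTop hβα hc)
      (Or.inr ENNReal.ofReal_ne_top)
  refine ENNReal.limsup_le_mul_limsup_of_le_add ENNReal.ofReal_ne_top ?_ hdecay
  filter_upwards [eventually_gt_atTop 0] with y hy
  exact setLIntegral_Ioo_one_add_rpow_mul_div_le (hb y) hα₀ hε hy

/-- If the mean number of daughter aggregates `∫₀^y b(x,y) dx` grows at most polynomially
(with every exponent `α > η` admissible), then for every `α > η`,
`limsup_{y→∞} n_{1,α}(y)/(1+y)^α ≤ limsup_{y→∞} n_α(y)/y^α` in `[0,∞]`, where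
`n_{1,α}(y) = ∫₀^y (1+x)^α b(x,y) dx` and `n_α(y) = ∫₀^y x^α b(x,y) dx`. -/
theorem stmt12 (b : ℝ → ℝ → ℝ) (hb_meas : Measurable (Function.uncurry b))
    (hb_nonneg : ∀ x y, 0 ≤ b x y) (hb_supp : ∀ x y, y ≤ x → b x y = 0)
    (η : ℝ) (hη : 1 ≤ η)
    (hpoly : ∀ α > η, ∃ c > (0 : ℝ), ∀ y > (0 : ℝ),
        ∫⁻ x in Ioo (0 : ℝ) y, ENNReal.ofReal (b x y)
          ≤ ENNReal.ofReal (c * (1 + y) ^ α)) :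
    ∀ α > η,
      limsup (fun y : ℝ =>
          (∫⁻ x in Ioo (0 : ℝ) y, ENNReal.ofReal ((1 + x) ^ α * b x y))
            / ENNReal.ofReal ((1 + y) ^ α)) atTop
        ≤ limsup (fun y : ℝ =>
          (∫⁻ x in Ioo (0 : ℝ) y, ENNReal.ofReal (x ^ α * b x y))
            / ENNReal.ofReal (y ^ α)) atTop :=
  stmt12_general b hb_meas η hη hpoly
end

section
/- Let y > 0, let w : (0,y) → [0,∞) be measurable with ∫₀^y x w(x) dx = y, let ε ∈ [0,1], and let 1 ≤ α ≤ α₂ with α₂ > 1. If (∫₀^y x^{α₂} w(x) dx) / y^{α₂} ≤ 1 − ε, then (∫₀^y x^α w(x) dx) / y^α ≤ 1 − ε (α − 1)/(α₂ − 1). -/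
open MeasureTheory Set

/-!
Write `α = (1 - t) · 1 + t · α₂` with `t = (α - 1)/(α₂ - 1) ∈ [0, 1]`. Convexity of
`p ↦ (x/y)^p` gives, for `0 < x < y`, the pointwise bound
`x^α ≤ (1 - t) y^(α-1) x + t y^(α-α₂) x^α₂`. Integrating against `w ≥ 0` and inserting the
mass identity and the `α₂`-moment bound yields `(1 - t) y^α + t (1 - ε) y^α = (1 - ε t) y^α`.
-/

theorem Real.rpow_le_sub_mul_add_mul_of_exponent_eq {x y a b p t : ℝ} (hx : 0 < x) (hy : 0 < y)
    (ht₀ : 0 ≤ t) (ht₁ : t ≤ 1) (hp : p = (1 - t) * a + t * b) :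
    x ^ p ≤ (1 - t) * y ^ (p - a) * x ^ a + t * y ^ (p - b) * x ^ b := by
  have hconv : (x / y) ^ p ≤ (1 - t) * (x / y) ^ a + t * (x / y) ^ b := by
    have := (convexOn_rpow_left (div_pos hx hy)).2 (mem_univ a) (mem_univ b)
      (sub_nonneg.2 ht₁) ht₀ (by ring)
    simpa only [smul_eq_mul, ← hp] using this
  have hyp : 0 < y ^ p := Real.rpow_pos_of_pos hy p
  rw [Real.div_rpow hx.le hy.le, Real.div_rpow hx.le hy.le, Real.div_rpow hx.le hy.le,
    div_le_iff₀ hyp] at hconv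
  rw [Real.rpow_sub hy, Real.rpow_sub hy]
  calc x ^ p ≤ _ := hconv
    _ = _ := by field_simp

theorem lintegral_ofReal_le_mul_add_mul {X : Type*} [MeasurableSpace X] {μ : Measure X}
    {f g₁ g₂ : X → ℝ} {c₁ c₂ : ℝ} (hc₁ : 0 ≤ c₁) (hc₂ : 0 ≤ c₂) (hg₂ : AEMeasurable g₂ μ)
    (h : ∀ᵐ x ∂μ, f x ≤ c₁ * g₁ x + c₂ * g₂ x) :
    ∫⁻ x, ENNReal.ofReal (f x) ∂μ ≤
      ENNReal.ofReal c₁ * ∫⁻ x, ENNReal.ofReal (g₁ x) ∂μ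
        + ENNReal.ofReal c₂ * ∫⁻ x, ENNReal.ofReal (g₂ x) ∂μ := by
  calc ∫⁻ x, ENNReal.ofReal (f x) ∂μ
      ≤ ∫⁻ x, ENNReal.ofReal c₁ * ENNReal.ofReal (g₁ x)
          + ENNReal.ofReal c₂ * ENNReal.ofReal (g₂ x) ∂μ := by
        refine lintegral_mono_ae (h.mono fun x hx => ?_)
        rw [← ENNReal.ofReal_mul hc₁, ← ENNReal.ofReal_mul hc₂]
        exact (ENNReal.ofReal_le_ofReal hx).trans ENNReal.ofReal_add_le
    _ = _ := by
        rw [lintegral_add_right' _ (hg₂.ennreal_ofReal.const_mul _),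
          lintegral_const_mul' _ _ ENNReal.ofReal_ne_top,
          lintegral_const_mul' _ _ ENNReal.ofReal_ne_top]

theorem stmt13_general (y : ℝ) (hy : 0 < y) (w : ℝ → ℝ) (hw_meas : Measurable w)
    (hw_nonneg : ∀ x ∈ Ioo (0 : ℝ) y, 0 ≤ w x)
    (hmass : ∫⁻ x in Ioo (0 : ℝ) y, ENNReal.ofReal (x * w x) = ENNReal.ofReal y)
    (ε : ℝ) (hε1 : ε ≤ 1)
    (α α₂ : ℝ) (hα1 : 1 ≤ α) (hαα₂ : α ≤ α₂) (hα₂ : 1 < α₂)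
    (h2 : ∫⁻ x in Ioo (0 : ℝ) y, ENNReal.ofReal (x ^ α₂ * w x)
        ≤ ENNReal.ofReal ((1 - ε) * y ^ α₂)) :
    ∫⁻ x in Ioo (0 : ℝ) y, ENNReal.ofReal (x ^ α * w x)
      ≤ ENNReal.ofReal ((1 - ε * (α - 1) / (α₂ - 1)) * y ^ α) := by
  have hd : 0 < α₂ - 1 := sub_pos.2 hα₂
  set t := (α - 1) / (α₂ - 1) with ht
  have ht₀ : 0 ≤ t := div_nonneg (by linarith) hd.le
  have ht₁ : t ≤ 1 := (div_le_one hd).2 (by linarith)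
  have hα : α = (1 - t) * 1 + t * α₂ := by rw [ht]; field_simp; ring
  have hc₁ : 0 ≤ (1 - t) * y ^ (α - 1) := mul_nonneg (sub_nonneg.2 ht₁) (by positivity)
  have hc₂ : 0 ≤ t * y ^ (α - α₂) := mul_nonneg ht₀ (by positivity)
  have hpointwise : ∀ᵐ x ∂volume.restrict (Ioo 0 y), x ^ α * w x ≤
      (1 - t) * y ^ (α - 1) * (x * w x) + t * y ^ (α - α₂) * (x ^ α₂ * w x) := by
    refine ae_restrict_of_forall_mem measurableSet_Ioo fun x hx => ?_
    have hbound := Real.rpow_le_sub_mul_add_mul_of_exponent_eq hx.1 hy ht₀ ht₁ hα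
    rw [Real.rpow_one] at hbound
    linear_combination mul_le_mul_of_nonneg_right hbound (hw_nonneg x hx)
  calc _ ≤ _ := lintegral_ofReal_le_mul_add_mul hc₁ hc₂ (by fun_prop) hpointwise
    _ ≤ ENNReal.ofReal ((1 - t) * y ^ (α - 1)) * ENNReal.ofReal y
        + ENNReal.ofReal (t * y ^ (α - α₂)) * ENNReal.ofReal ((1 - ε) * y ^ α₂) := by
      rw [hmass]; gcongr
    _ = _ := by
      rw [← ENNReal.ofReal_mul hc₁, ← ENNReal.ofReal_mul hc₂, ← ENNReal.ofReal_add
        (mul_nonneg hc₁ hy.le) (mul_nonneg hc₂ (mul_nonneg (by linarith) (by positivity)))]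
      congr 1
      rw [Real.rpow_sub hy, Real.rpow_sub hy, Real.rpow_one, ht]
      field_simp
      ring

/-- Convexity interpolation for moments of a mass-conserving fragmentation kernel:
if `∫₀^y x w(x) dx = y`, `ε ∈ [0,1]`, `1 ≤ α ≤ α₂`, `α₂ > 1` and
`(∫₀^y x^{α₂} w(x) dx)/y^{α₂} ≤ 1 − ε`, then
`(∫₀^y x^α w(x) dx)/y^α ≤ 1 − ε(α−1)/(α₂−1)`. -/
theorem stmt13 (y : ℝ) (hy : 0 < y) (w : ℝ → ℝ) (hw_meas : Measurable w)
    (hw_nonneg : ∀ x ∈ Ioo (0 : ℝ) y, 0 ≤ w x)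
    (hmass : ∫⁻ x in Ioo (0 : ℝ) y, ENNReal.ofReal (x * w x) = ENNReal.ofReal y)
    (ε : ℝ) (hε0 : 0 ≤ ε) (hε1 : ε ≤ 1)
    (α α₂ : ℝ) (hα1 : 1 ≤ α) (hαα₂ : α ≤ α₂) (hα₂ : 1 < α₂)
    (h2 : ∫⁻ x in Ioo (0 : ℝ) y, ENNReal.ofReal (x ^ α₂ * w x)
        ≤ ENNReal.ofReal ((1 - ε) * y ^ α₂)) :
    ∫⁻ x in Ioo (0 : ℝ) y, ENNReal.ofReal (x ^ α * w x)
      ≤ ENNReal.ofReal ((1 - ε * (α - 1) / (α₂ - 1)) * y ^ α) :=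
  stmt13_general y hy w hw_meas hw_nonneg hmass ε hε1 α α₂ hα1 hαα₂ hα₂ h2
end

section
/- Let β : (0,∞) → [0,∞) be measurable with 0 < ∫₀^y s β(s) ds < ∞ for every y > 0, and suppose that β₀⁻ := liminf_{x→0⁺} x β(x) > 0 and β₀⁺ := limsup_{x→0⁺} x β(x) < ∞. Then for every α > 1, limsup_{y→0⁺} y^{1−α} (∫₀^y x^α β(x) dx) / (∫₀^y x β(x) dx) ≤ β₀⁺ / (α β₀⁻). -/
open MeasureTheory Set Filter Topology

/-!
Near `0` the function `x β(x)` lies between `m - ε` and `M + ε`, where `m` and `M` are its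
liminf and limsup at `0⁺`. Writing `x^α β(x) = x^{α-1} · x β(x)`, the numerator is at most
`(M + ε) y^α / α` and the denominator at least `(m - ε) y`, so the quotient times `y^{1-α}` is at
most `(M + ε) / (α (m - ε))`; let `ε → 0`.
-/

lemma integral_Ioo_rpow_sub_one {α y : ℝ} (hα : 0 < α) (hy : 0 ≤ y) :
    ∫ x in Ioo 0 y, x ^ (α - 1) = y ^ α / α := by
  rw [← integral_Ioc_eq_integral_Ioo, ← intervalIntegral.integral_of_le hy,
    integral_rpow (Or.inl (by linarith)), sub_add_cancel, Real.zero_rpow hα.ne', sub_zero]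

lemma setIntegral_Ioo_rpow_mul_le {β : ℝ → ℝ} {α y C : ℝ} (hα : 0 < α) (hy : 0 ≤ y)
    (hβ : ∀ x ∈ Ioo 0 y, 0 ≤ β x) (hC : ∀ x ∈ Ioo 0 y, x * β x ≤ C) :
    ∫ x in Ioo 0 y, x ^ α * β x ≤ C * (y ^ α / α) := by
  have hrpow : IntegrableOn (fun x : ℝ => x ^ (α - 1)) (Ioo 0 y) :=
    ((intervalIntegrable_iff_integrableOn_Ioc_of_le hy).1
      (intervalIntegral.intervalIntegrable_rpow' (by linarith))).mono_set Ioo_subset_Ioc_self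
  rw [← integral_Ioo_rpow_sub_one hα hy, ← integral_const_mul]
  refine integral_mono_of_nonneg ?_ (hrpow.const_mul C) ?_
  all_goals refine (ae_restrict_iff' measurableSet_Ioo).2 (ae_of_all _ fun x hx => ?_)
  · exact mul_nonneg (Real.rpow_nonneg hx.1.le α) (hβ x hx)
  · calc x ^ α * β x = x ^ (α - 1) * (x * β x) := by
          rw [← mul_assoc, ← Real.rpow_add_one hx.1.ne', sub_add_cancel]
      _ ≤ x ^ (α - 1) * C := mul_le_mul_of_nonneg_left (hC x hx) (Real.rpow_nonneg hx.1.le _)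
      _ = C * x ^ (α - 1) := mul_comm _ _

lemma mul_le_setIntegral_Ioo {f : ℝ → ℝ} {y c : ℝ} (hy : 0 ≤ y)
    (hf : IntegrableOn f (Ioo 0 y)) (hc : ∀ x ∈ Ioo 0 y, c ≤ f x) :
    c * y ≤ ∫ x in Ioo 0 y, f x := by
  simpa [Real.volume_real_Ioo_of_le hy] using
    setIntegral_ge_of_const_le_real measurableSet_Ioo measure_Ioo_lt_top.ne hc hf

lemma rpow_one_sub_mul_div_le {α y N D C c : ℝ} (hα : 0 < α) (hy : 0 < y) (hc : 0 < c)
    (hN₀ : 0 ≤ N) (hN : N ≤ C * (y ^ α / α)) (hD : c * y ≤ D) :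
    y ^ (1 - α) * (N / D) ≤ C / (α * c) := by
  have hyy : y ^ (1 - α) * y ^ α = y := by rw [← Real.rpow_add hy, sub_add_cancel, Real.rpow_one]
  calc y ^ (1 - α) * (N / D) ≤ y ^ (1 - α) * (C * (y ^ α / α) / (c * y)) := by
        have : 0 < c * y := by positivity
        gcongr
        exact hN₀.trans hN
    _ = C / (α * c) := by
        field_simp
        rw [mul_right_comm, hyy, mul_comm]

/-- `n_α(y) / y^α` for the kernel built from `β`. -/
noncomputable def momentRatio (β : ℝ → ℝ) (α y : ℝ) : ℝ :=
  y ^ (1 - α) * ((∫ x in Ioo 0 y, x ^ α * β x) / ∫ x in Ioo 0 y, x * β x)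

section

variable {β : ℝ → ℝ} (hβ_nonneg : ∀ x > (0 : ℝ), 0 ≤ β x)
include hβ_nonneg

lemma momentRatio_nonneg {α y : ℝ} (hy : 0 < y) : 0 ≤ momentRatio β α y := by
  have hnum : 0 ≤ ∫ x in Ioo 0 y, x ^ α * β x :=
    setIntegral_nonneg measurableSet_Ioo fun x hx =>
      mul_nonneg (Real.rpow_nonneg hx.1.le α) (hβ_nonneg x hx.1)
  have hden : 0 ≤ ∫ x in Ioo 0 y, x * β x :=
    setIntegral_nonneg measurableSet_Ioo fun x hx => mul_nonneg hx.1.le (hβ_nonneg x hx.1)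
  exact mul_nonneg (Real.rpow_nonneg hy.le _) (div_nonneg hnum hden)

lemma limsup_momentRatio_le {α C c : ℝ} (hα : 0 < α)
    (hβ_int : ∀ y > (0 : ℝ), IntegrableOn (fun s => s * β s) (Ioo 0 y)) (hc : 0 < c)
    (hC : ∀ᶠ x in 𝓝[>] 0, x * β x ≤ C) (hc' : ∀ᶠ x in 𝓝[>] 0, c ≤ x * β x) :
    limsup (momentRatio β α) (𝓝[>] 0) ≤ C / (α * c) := by
  have hF_nonneg : ∀ᶠ y in 𝓝[>] 0, 0 ≤ momentRatio β α y :=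
    eventually_nhdsWithin_of_forall fun y hy => momentRatio_nonneg hβ_nonneg hy
  refine limsup_le_of_le (isBoundedUnder_of_eventually_ge hF_nonneg).isCoboundedUnder_le ?_
  obtain ⟨δ, hδ, hsub⟩ := mem_nhdsGT_iff_exists_Ioo_subset.1 (hC.and hc')
  filter_upwards [Ioo_mem_nhdsGT hδ] with y ⟨hy, hyδ⟩
  have hbound : ∀ x ∈ Ioo 0 y, x * β x ≤ C ∧ c ≤ x * β x :=
    fun x hx => hsub ⟨hx.1, hx.2.trans hyδ⟩
  refine rpow_one_sub_mul_div_le hα hy hc ?_ ?_ ?_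
  · exact setIntegral_nonneg measurableSet_Ioo fun x hx =>
      mul_nonneg (Real.rpow_nonneg hx.1.le α) (hβ_nonneg x hx.1)
  · exact setIntegral_Ioo_rpow_mul_le hα hy.le (fun x hx => hβ_nonneg x hx.1)
      fun x hx => (hbound x hx).1
  · exact mul_le_setIntegral_Ioo hy.le (hβ_int y hy) fun x hx => (hbound x hx).2

end

theorem stmt16_general (β : ℝ → ℝ) (hβ_nonneg : ∀ x > (0 : ℝ), 0 ≤ β x)
    (hβ_int : ∀ y > (0 : ℝ), IntegrableOn (fun s => s * β s) (Ioo (0 : ℝ) y))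
    (hliminf_pos : 0 < liminf (fun x => x * β x) (nhdsWithin 0 (Ioi (0 : ℝ))))
    (hlimsup_fin :
      IsBoundedUnder (· ≤ ·) (nhdsWithin 0 (Ioi (0 : ℝ))) (fun x => x * β x)) :
    ∀ α > (1 : ℝ),
      limsup (fun y => y ^ (1 - α) *
          ((∫ x in Ioo (0 : ℝ) y, x ^ α * β x) / ∫ x in Ioo (0 : ℝ) y, x * β x))
        (nhdsWithin 0 (Ioi (0 : ℝ)))
        ≤ (limsup (fun x => x * β x) (nhdsWithin 0 (Ioi (0 : ℝ))))
          / (α * liminf (fun x => x * β x) (nhdsWithin 0 (Ioi (0 : ℝ)))) := by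
  intro α hα
  set m := liminf (fun x => x * β x) (𝓝[>] 0)
  set M := limsup (fun x => x * β x) (𝓝[>] 0)
  have hbdd_ge : IsBoundedUnder (· ≥ ·) (𝓝[>] 0) (fun x => x * β x) :=
    isBoundedUnder_of_eventually_ge <|
      eventually_nhdsWithin_of_forall fun x hx => mul_nonneg (le_of_lt hx) (hβ_nonneg x hx)
  have hbound : ∀ ε ∈ Ioo 0 m, limsup (momentRatio β α) (𝓝[>] 0) ≤ (M + ε) / (α * (m - ε)) :=
    fun ε hε => limsup_momentRatio_le hβ_nonneg (by linarith) hβ_int (by linarith [hε.2])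
      ((eventually_lt_of_limsup_lt (by linarith [hε.1]) hlimsup_fin).mono fun _ => le_of_lt)
      ((eventually_lt_of_lt_liminf (by linarith [hε.1]) hbdd_ge).mono fun _ => le_of_lt)
  have hlim : Tendsto (fun ε => (M + ε) / (α * (m - ε))) (𝓝[>] 0) (𝓝 (M / (α * m))) := by
    have hcont : ContinuousAt (fun ε => (M + ε) / (α * (m - ε))) 0 := by
      fun_prop (disch := simp only [sub_zero]; positivity)
    simpa using hcont.tendsto.mono_left nhdsWithin_le_nhds
  exact ge_of_tendsto hlim (mem_of_superset (Ioo_mem_nhdsGT hliminf_pos) hbound)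

/-- For a separable fragmentation kernel given by `β` with `0 < ∫₀^y s β(s) ds < ∞` for all
`y > 0`, if `β₀⁻ := liminf_{x→0⁺} x β(x) > 0` and `β₀⁺ := limsup_{x→0⁺} x β(x) < ∞`, then
for every `α > 1`,
`limsup_{y→0⁺} y^{1−α} (∫₀^y x^α β(x) dx)/(∫₀^y x β(x) dx) ≤ β₀⁺/(α β₀⁻)`. -/
theorem stmt16 (β : ℝ → ℝ) (hβ_meas : Measurable β) (hβ_nonneg : ∀ x > (0 : ℝ), 0 ≤ β x)
    (hβ_int : ∀ y > (0 : ℝ), IntegrableOn (fun s => s * β s) (Ioo (0 : ℝ) y))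
    (hβ_pos : ∀ y > (0 : ℝ), 0 < ∫ s in Ioo (0 : ℝ) y, s * β s)
    (hliminf_pos : 0 < liminf (fun x => x * β x) (nhdsWithin 0 (Ioi (0 : ℝ))))
    (hlimsup_fin :
      IsBoundedUnder (· ≤ ·) (nhdsWithin 0 (Ioi (0 : ℝ))) (fun x => x * β x)) :
    ∀ α > (1 : ℝ),
      limsup (fun y => y ^ (1 - α) *
          ((∫ x in Ioo (0 : ℝ) y, x ^ α * β x) / ∫ x in Ioo (0 : ℝ) y, x * β x))
        (nhdsWithin 0 (Ioi (0 : ℝ)))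
        ≤ (limsup (fun x => x * β x) (nhdsWithin 0 (Ioi (0 : ℝ))))
          / (α * liminf (fun x => x * β x) (nhdsWithin 0 (Ioi (0 : ℝ)))) :=
  stmt16_general β hβ_nonneg hβ_int hliminf_pos hlimsup_fin
end

section
/- Let ᾱ > 1 and let β : (0,∞) → [0,∞) be measurable with ∫₀^∞ β(x)(1 + x^{ᾱ}) dx < ∞ and ∫₀^1 x β(x) dx > 0. Then for every α with 1 < α ≤ ᾱ, (y/(1+y)^α) · (∫₀^y β(x)(1+x)^α dx) / (∫₀^y x β(x) dx) → 0 as y → +∞. -/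
/-!
The numerator `∫₀^y β(x)(1+x)^α dx` increases to the finite integral `∫₀^∞ β(x)(1+x)^α dx`,
finite because `(1+x)^α ≤ 2^(ᾱ-1)(1 + x^ᾱ)`, and for `y ≥ 1` the denominator is at least
`∫₀¹ x β(x) dx > 0`. So the quotient of integrals stays bounded, while `y/(1+y)^α → 0` for `α > 1`.
-/

open MeasureTheory Set Filter Topology

lemma one_add_rpow_le_two_rpow_mul {α p x : ℝ} (hx : 0 ≤ x) (hαp : α ≤ p) (hp : 1 ≤ p) :
    (1 + x) ^ α ≤ 2 ^ (p - 1) * (1 + x ^ p) := by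
  lift x to NNReal using hx
  calc (1 + (x : ℝ)) ^ α ≤ (1 + (x : ℝ)) ^ p :=
        Real.rpow_le_rpow_of_exponent_le (by simp) hαp
    _ ≤ 2 ^ (p - 1) * (1 + (x : ℝ) ^ p) := by
        exact_mod_cast (NNReal.one_rpow p ▸ NNReal.rpow_add_le_mul_rpow_add_rpow 1 x hp)

lemma tendsto_div_one_add_rpow_atTop {α : ℝ} (hα : 1 < α) :
    Tendsto (fun y : ℝ => y / (1 + y) ^ α) atTop (𝓝 0) := by
  have hdecay : Tendsto (fun y : ℝ => (1 + y) ^ (-(α - 1))) atTop (𝓝 0) :=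
    (tendsto_rpow_neg_atTop (by linarith)).comp (tendsto_atTop_add_const_left _ _ tendsto_id)
  refine tendsto_of_tendsto_of_tendsto_of_le_of_le' tendsto_const_nhds hdecay ?_ ?_
  all_goals filter_upwards [eventually_ge_atTop 0] with y hy
  · positivity
  · have hy1 : 0 < 1 + y := by linarith
    calc y / (1 + y) ^ α ≤ (1 + y) / (1 + y) ^ α := by gcongr; linarith
      _ = (1 + y) ^ (-(α - 1)) := by rw [neg_sub, Real.rpow_sub hy1, Real.rpow_one]

lemma div_setIntegral_Ioo_le {f g : ℝ → ℝ} (hf : IntegrableOn f (Ioi 0))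
    (hg : IntegrableOn g (Ioi 0)) (hf_nonneg : ∀ x > 0, 0 ≤ f x) (hg_nonneg : ∀ x > 0, 0 ≤ g x)
    (hg_pos : 0 < ∫ x in Ioo 0 1, g x) {y : ℝ} (hy : 1 ≤ y) :
    (∫ x in Ioo 0 y, f x) / (∫ x in Ioo 0 y, g x) ≤
      (∫ x in Ioi 0, f x) / (∫ x in Ioo 0 1, g x) := by
  have hf_le : ∫ x in Ioo 0 y, f x ≤ ∫ x in Ioi 0, f x :=
    setIntegral_mono_set hf ((ae_restrict_mem measurableSet_Ioi).mono hf_nonneg)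
      Ioo_subset_Ioi_self.eventuallyLE
  have hg_ge : ∫ x in Ioo 0 1, g x ≤ ∫ x in Ioo 0 y, g x :=
    setIntegral_mono_set (hg.mono_set Ioo_subset_Ioi_self)
      ((ae_restrict_mem measurableSet_Ioo).mono fun x hx => hg_nonneg x hx.1)
      (Ioo_subset_Ioo_right hy).eventuallyLE
  have hf_nonneg' : 0 ≤ ∫ x in Ioi 0, f x := setIntegral_nonneg measurableSet_Ioi hf_nonneg
  exact div_le_div₀ hf_nonneg' hf_le hg_pos hg_ge

section Kernel

variable {β : ℝ → ℝ} (hβ_meas : Measurable β) (hβ_nonneg : ∀ x > (0 : ℝ), 0 ≤ β x)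
include hβ_meas hβ_nonneg

lemma integrableOn_mul_one_add_rpow {α p : ℝ} (hp : 1 ≤ p) (hαp : α ≤ p)
    (hβ_int : IntegrableOn (fun x => β x * (1 + x ^ p)) (Ioi 0)) :
    IntegrableOn (fun x => β x * (1 + x) ^ α) (Ioi 0) := by
  refine Integrable.mono' (hβ_int.const_mul (2 ^ (p - 1)))
    (hβ_meas.mul ((measurable_const.add measurable_id).pow_const α)).aestronglyMeasurable ?_
  filter_upwards [ae_restrict_mem measurableSet_Ioi] with x (hx : 0 < x)
  rw [Real.norm_of_nonneg (mul_nonneg (hβ_nonneg x hx) (by positivity)), mul_left_comm]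
  exact mul_le_mul_of_nonneg_left (one_add_rpow_le_two_rpow_mul hx.le hαp hp) (hβ_nonneg x hx)

lemma integrableOn_mul_self_of_one_le {α : ℝ} (hα : 1 ≤ α)
    (hβα : IntegrableOn (fun x => β x * (1 + x) ^ α) (Ioi 0)) :
    IntegrableOn (fun x => x * β x) (Ioi 0) := by
  refine Integrable.mono' hβα (measurable_id.mul hβ_meas).aestronglyMeasurable ?_
  filter_upwards [ae_restrict_mem measurableSet_Ioi] with x (hx : 0 < x)
  rw [Real.norm_of_nonneg (mul_nonneg hx.le (hβ_nonneg x hx)), mul_comm]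
  refine mul_le_mul_of_nonneg_left ?_ (hβ_nonneg x hx)
  calc x ≤ 1 + x := by linarith
    _ ≤ (1 + x) ^ α := Real.self_le_rpow_of_one_le (by linarith) hα

end Kernel

/-- For a separable fragmentation kernel given by `β` with `∫₀^∞ β(x)(1+x^{ᾱ}) dx < ∞`
for some `ᾱ > 1` and `∫₀¹ x β(x) dx > 0`, for every `1 < α ≤ ᾱ` one has
`(y/(1+y)^α) (∫₀^y β(x)(1+x)^α dx)/(∫₀^y x β(x) dx) → 0` as `y → +∞`. -/
theorem stmt18 (abar : ℝ) (habar : 1 < abar) (β : ℝ → ℝ) (hβ_meas : Measurable β)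
    (hβ_nonneg : ∀ x > (0 : ℝ), 0 ≤ β x)
    (hβ_int : IntegrableOn (fun x => β x * (1 + x ^ abar)) (Ioi (0 : ℝ)))
    (hβ_pos : 0 < ∫ x in Ioo (0 : ℝ) 1, x * β x) :
    ∀ α : ℝ, 1 < α → α ≤ abar →
      Tendsto (fun y => (y / (1 + y) ^ α) *
          ((∫ x in Ioo (0 : ℝ) y, β x * (1 + x) ^ α) / ∫ x in Ioo (0 : ℝ) y, x * β x))
        atTop (nhds 0) := by
  intro α hα hαbar
  have hnum_int := integrableOn_mul_one_add_rpow hβ_meas hβ_nonneg habar.le hαbar hβ_int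
  have hden_int := integrableOn_mul_self_of_one_le hβ_meas hβ_nonneg hα.le hnum_int
  have hnum_nonneg : ∀ x > (0 : ℝ), 0 ≤ β x * (1 + x) ^ α :=
    fun x hx => mul_nonneg (hβ_nonneg x hx) (by positivity)
  have hden_nonneg : ∀ x > (0 : ℝ), 0 ≤ x * β x :=
    fun x hx => mul_nonneg hx.le (hβ_nonneg x hx)
  refine (tendsto_div_one_add_rpow_atTop hα).zero_mul_isBoundedUnder_le
    (isBoundedUnder_of_eventually_le
      (a := (∫ x in Ioi 0, β x * (1 + x) ^ α) / ∫ x in Ioo 0 1, x * β x) ?_)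
  filter_upwards [eventually_ge_atTop 1] with y hy
  rw [Function.comp_apply, Real.norm_of_nonneg (div_nonneg
    (setIntegral_nonneg measurableSet_Ioo fun x hx => hnum_nonneg x hx.1)
    (setIntegral_nonneg measurableSet_Ioo fun x hx => hden_nonneg x hx.1))]
  exact div_setIntegral_Ioo_le hnum_int hden_int hnum_nonneg hden_nonneg hβ_pos hy
end
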